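/- Define λᵢ = (1 + Σ_{m=1}^{i} a_{τ_m}²)/(Σ_{m=1}^{i} b_{τ_m}) where bⱼ = aⱼcⱼ. If λᵢ < φ_{τ_{i+1}}⁻¹ then λ_{i+1} < φ_{τ_{i+2}}⁻¹; that is, once the threshold condition holds at index i it holds for all larger indices. -/

import Mathlib

/-! The ratio `λᵢ` is a quotient of sums, and `λᵢ₊₁` is the mediant of `λᵢ` and
`a²/b = φ⁻¹` at the `(i+1)`-st index. A mediant of two fractions below a bound stays below
it, and the bound `φ⁻¹` only grows along the decreasing order of `φ`. -/

open Finset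

theorem add_div_add_lt_of_div_lt_of_div_le {x y u v r : ℝ} (hy : 0 < y) (hv : 0 < v)
    (hxy : x / y < r) (huv : u / v ≤ r) : (x + u) / (y + v) < r := by
  rw [div_lt_iff₀ hy] at hxy
  rw [div_le_iff₀ hv] at huv
  rw [div_lt_iff₀ (add_pos hy hv)]
  linarith

theorem Fin.filter_val_lt_succ {R i : ℕ} (hi : i < R) :
    univ.filter (fun m : Fin R => (m : ℕ) < i + 1) =
      insert ⟨i, hi⟩ (univ.filter fun m : Fin R => (m : ℕ) < i) := by
  ext m
  simp only [mem_filter, mem_insert, mem_univ, true_and, Fin.ext_iff]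
  omega

theorem Fin.sum_filter_val_lt_succ {M : Type*} [AddCommMonoid M] {R i : ℕ} (hi : i < R)
    (f : Fin R → M) :
    ∑ m ∈ univ.filter (fun m : Fin R => (m : ℕ) < i + 1), f m =
      f ⟨i, hi⟩ + ∑ m ∈ univ.filter (fun m : Fin R => (m : ℕ) < i), f m := by
  rw [Fin.filter_val_lt_succ hi, sum_insert (by simp)]

theorem Fin.sum_filter_val_lt_pos {R i : ℕ} (hi1 : 1 ≤ i) (hiR : i < R) {f : Fin R → ℝ}
    (hf : ∀ m, 0 < f m) : 0 < ∑ m ∈ univ.filter (fun m : Fin R => (m : ℕ) < i), f m :=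
  sum_pos (fun m _ => hf m) ⟨⟨0, by omega⟩, by simp only [mem_filter, mem_univ, true_and]; omega⟩

theorem sq_div_mul_eq_inv_div {a c : ℝ} (ha : a ≠ 0) (hc : c ≠ 0) :
    a ^ 2 / (a * c) = (c / a)⁻¹ := by
  field_simp

theorem stmt_7_general (R : ℕ) (a c : Fin R → ℝ)
    (ha : ∀ j, 0 < a j) (hc : ∀ j, 0 < c j) (τ : Equiv.Perm (Fin R))
    (hord : ∀ i j : Fin R, i ≤ j → c (τ j) / a (τ j) ≤ c (τ i) / a (τ i))
    (lam : ℕ → ℝ)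
    (hlam : ∀ i : ℕ, lam i =
      (1 + ∑ m ∈ Finset.univ.filter (fun m : Fin R => (m : ℕ) < i), (a (τ m)) ^ 2) /
        (∑ m ∈ Finset.univ.filter (fun m : Fin R => (m : ℕ) < i), a (τ m) * c (τ m)))
    (i : ℕ) (hi1 : 1 ≤ i) (hiR : i < R)
    (hcond : lam i < (c (τ ⟨i, hiR⟩) / a (τ ⟨i, hiR⟩))⁻¹) :
    ∀ h2 : i + 1 < R, lam (i + 1) < (c (τ ⟨i + 1, h2⟩) / a (τ ⟨i + 1, h2⟩))⁻¹ := by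
  intro h2
  set j : Fin R := ⟨i, hiR⟩
  have hmediant : lam (i + 1) < (c (τ j) / a (τ j))⁻¹ := by
    rw [hlam, Fin.sum_filter_val_lt_succ hiR, Fin.sum_filter_val_lt_succ hiR, add_left_comm,
      add_comm (a (τ j) ^ 2), add_comm (a (τ j) * c (τ j))]
    exact add_div_add_lt_of_div_lt_of_div_le
      (Fin.sum_filter_val_lt_pos hi1 hiR fun m => mul_pos (ha _) (hc _))
      (mul_pos (ha _) (hc _)) (hlam i ▸ hcond)
      (sq_div_mul_eq_inv_div (ha _).ne' (hc _).ne').le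
  have hφ : c (τ ⟨i + 1, h2⟩) / a (τ ⟨i + 1, h2⟩) ≤ c (τ j) / a (τ j) :=
    hord j _ (Fin.mk_le_mk.mpr i.le_succ)
  exact hmediant.trans_le (inv_anti₀ (div_pos (hc _) (ha _)) hφ)

/-- With `λᵢ = (1 + Σ_{m=1}^{i} a_{τ_m}²)/(Σ_{m=1}^{i} b_{τ_m})`,
`bⱼ = aⱼcⱼ`, if `λᵢ < φ_{τ_{i+1}}⁻¹` then `λ_{i+1} < φ_{τ_{i+2}}⁻¹`
(the case `i+2 = R+1` is vacuous by the convention `φ_{τ_{R+1}}⁻¹ = ∞`,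
encoded here by quantifying over the proof that `τ_{i+2}` exists;
0-based indexing: `τ m` is the paper's `τ_{m+1}`). -/
theorem stmt_7 (R : ℕ) (hR : 1 ≤ R) (a c : Fin R → ℝ)
    (ha : ∀ j, 0 < a j) (hc : ∀ j, 0 < c j) (τ : Equiv.Perm (Fin R))
    (hord : ∀ i j : Fin R, i ≤ j → c (τ j) / a (τ j) ≤ c (τ i) / a (τ i))
    (lam : ℕ → ℝ)
    (hlam : ∀ i : ℕ, lam i =
      (1 + ∑ m ∈ Finset.univ.filter (fun m : Fin R => (m : ℕ) < i), (a (τ m)) ^ 2) /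
        (∑ m ∈ Finset.univ.filter (fun m : Fin R => (m : ℕ) < i), a (τ m) * c (τ m)))
    (i : ℕ) (hi1 : 1 ≤ i) (hiR : i < R)
    (hcond : lam i < (c (τ ⟨i, hiR⟩) / a (τ ⟨i, hiR⟩))⁻¹) :
    ∀ h2 : i + 1 < R, lam (i + 1) < (c (τ ⟨i + 1, h2⟩) / a (τ ⟨i + 1, h2⟩))⁻¹ :=
  stmt_7_general R a c ha hc τ hord lam hlam i hi1 hiR hcond
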